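/- Let q ≥ 2 be an integer and let θ be an integer such that either gcd(θ, q) = 1 or q divides θ. Then the map n ↦ w_q(n) + θ·n is uniformly distributed modulo q; that is, for every integer x, the limit lim_{N→∞} (1/N)·|{n < N : w_q(n) + θ·n ≡ x (mod q)}| exists and equals 1/q. -/

import Mathlib

/-!
Since `w_q(n) = ⌊n/q⌋ + w_q(⌊n/q⌋)`, writing `n = (a q + u) q + r` with digits `u, r < q` gives
`w_q(n) + θ n ≡ u + θ r + a + w_q(a) (mod q)`. In each block of `q²` consecutive integers starting
at a multiple of `q²`, for every `r` exactly one digit `u` reaches a given residue, so every residue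
occurs exactly `q` times per block, and the density is `q / q² = 1 / q`.
-/

open Filter

/-- `vq q n` is the `q`-adic valuation: `0` if `n = 0`, and otherwise the
largest `k` such that `q ^ k` divides `n`. -/
noncomputable def vq (q n : ℕ) : ℕ := if n = 0 then 0 else sSup {k : ℕ | q ^ k ∣ n}

/-- `wq q n = ∑_{i=0}^n vq q i`. -/
noncomputable def wq (q n : ℕ) : ℕ := ∑ i ∈ Finset.range (n + 1), vq q i

open Finset Topology Nat

section Valuation

variable {q n : ℕ}

theorem vq_eq_of_dvd_of_not_dvd {k : ℕ} (hn : n ≠ 0) (hk : q ^ k ∣ n)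
    (hk' : ¬q ^ (k + 1) ∣ n) : vq q n = k := by
  rw [vq, if_neg hn]
  refine IsGreatest.csSup_eq ⟨hk, fun j hj => ?_⟩
  by_contra! hkj
  exact hk' ((pow_dvd_pow q hkj).trans hj)

theorem vq_eq_multiplicity (hq : q ≠ 1) (hn : n ≠ 0) : vq q n = multiplicity q n :=
  vq_eq_of_dvd_of_not_dvd hn (pow_multiplicity_dvd q n)
    ((Nat.finiteMultiplicity_iff.2 ⟨hq, Nat.pos_of_ne_zero hn⟩).not_pow_dvd_of_multiplicity_lt
      (lt_add_one _))

theorem vq_of_not_dvd (h : ¬q ∣ n) : vq q n = 0 :=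
  vq_eq_of_dvd_of_not_dvd (by rintro rfl; exact h (dvd_zero q)) (by simp) (by simpa using h)

theorem vq_mul_left (hq : 1 < q) (hn : n ≠ 0) : vq q (q * n) = vq q n + 1 := by
  have hfin : FiniteMultiplicity q n := Nat.finiteMultiplicity_iff.2 ⟨hq.ne', Nat.pos_of_ne_zero hn⟩
  rw [vq_eq_multiplicity hq.ne' hn]
  refine vq_eq_of_dvd_of_not_dvd (by positivity) ?_ ?_
  · rw [pow_succ']
    exact mul_dvd_mul_left q (pow_multiplicity_dvd q n)
  · rw [pow_succ' q (_ + 1), Nat.mul_dvd_mul_iff_left (by omega)]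
    exact hfin.not_pow_dvd_of_multiplicity_lt (lt_add_one _)

end Valuation

section ValuationSum

theorem wq_succ (q n : ℕ) : wq q (n + 1) = wq q n + vq q (n + 1) :=
  sum_range_succ _ _

variable {q : ℕ}

theorem wq_eq_div_add_wq_div (hq : 1 < q) (n : ℕ) : wq q n = n / q + wq q (n / q) := by
  induction n with
  | zero => simp [wq, vq]
  | succ n ih =>
    rw [wq_succ, ih]
    by_cases h : q ∣ n + 1
    · obtain ⟨j, hj⟩ := h
      have hj0 : j ≠ 0 := by rintro rfl; omega
      have hdiv : (n + 1) / q = n / q + 1 := Nat.succ_div_of_dvd ⟨j, hj⟩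
      have hj' : n / q + 1 = j := by rw [← hdiv, hj, Nat.mul_div_cancel_left _ (by omega)]
      rw [hdiv, wq_succ, hj', hj, vq_mul_left hq hj0]
      omega
    · rw [Nat.succ_div_of_not_dvd h, vq_of_not_dvd h, add_zero]

theorem wq_two_digits (hq : 1 < q) (a : ℕ) {u r : ℕ} (hu : u < q) (hr : r < q) :
    wq q ((a * q + u) * q + r) = a * q + u + a + wq q a := by
  have hq0 : 0 < q := by omega
  have h1 : ((a * q + u) * q + r) / q = a * q + u := by
    rw [add_comm, Nat.add_mul_div_right _ _ hq0, Nat.div_eq_of_lt hr, zero_add]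
  have h2 : (a * q + u) / q = a := by
    rw [add_comm, Nat.add_mul_div_right _ _ hq0, Nat.div_eq_of_lt hu, zero_add]
  rw [wq_eq_div_add_wq_div hq, h1, wq_eq_div_add_wq_div hq, h2]
  ring

end ValuationSum

theorem Nat.count_mul_eq_sum (p : ℕ → Prop) [DecidablePred p] (m L : ℕ) :
    count p (m * L) = ∑ a ∈ range m, count (fun k => p (a * L + k)) L := by
  induction m with
  | zero => simp
  | succ m ih => rw [add_mul, one_mul, count_add, ih, sum_range_succ]

theorem abs_count_sub_le_of_count_block {p : ℕ → Prop} [DecidablePred p] {L c : ℕ} (hL : 0 < L)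
    (h : ∀ a, count (fun k => p (a * L + k)) L = c) (N : ℕ) :
    |(count p N : ℝ) - c / L * N| ≤ c := by
  have hmul (m : ℕ) : count p (m * L) = m * c := by simp [count_mul_eq_sum, h]
  set m := N / L
  have hlo : count p (m * L) ≤ count p N := count_monotone p (Nat.div_mul_le_self N L)
  have hhi : count p N ≤ count p ((m + 1) * L) := count_monotone p (by
    rw [add_one_mul]; exact (Nat.lt_div_mul_add hL).le)
  rw [hmul] at hlo hhi
  have hN₁ : (m : ℝ) * L ≤ N := by exact_mod_cast Nat.div_mul_le_self N L
  have hN₂ : (N : ℝ) ≤ m * L + L := by exact_mod_cast (Nat.lt_div_mul_add hL).le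
  have hL' : (0 : ℝ) < L := by exact_mod_cast hL
  have hcN₁ : (m : ℝ) * c ≤ c / L * N :=
    calc (m : ℝ) * c = c / L * (m * L) := by field_simp
      _ ≤ c / L * N := by gcongr
  have hcN₂ : c / L * N ≤ (m : ℝ) * c + c :=
    calc (c : ℝ) / L * N ≤ c / L * (m * L + L) := by gcongr
      _ = m * c + c := by field_simp
  have hlo' : (m : ℝ) * c ≤ count p N := by exact_mod_cast hlo
  have hhi' : (count p N : ℝ) ≤ (m + 1) * c := by exact_mod_cast hhi
  rw [abs_le]
  constructor <;> linarith

theorem tendsto_count_div_of_count_block {p : ℕ → Prop} [DecidablePred p] {L c : ℕ} (hL : 0 < L)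
    (h : ∀ a, count (fun k => p (a * L + k)) L = c) :
    Tendsto (fun N => (count p N : ℝ) / N) atTop (𝓝 (c / L)) := by
  have hdev : Tendsto (fun N => (count p N : ℝ) / N - c / L) atTop (𝓝 0) := by
    refine squeeze_zero_norm' ?_ (tendsto_const_div_atTop_nhds_zero_nat (c : ℝ))
    filter_upwards [eventually_gt_atTop 0] with N hN
    have hN' : (0 : ℝ) < N := by exact_mod_cast hN
    have hsplit : (count p N : ℝ) / N - c / L = ((count p N : ℝ) - c / L * N) / N := by
      field_simp
    rw [hsplit, norm_div, Real.norm_eq_abs, Real.norm_natCast]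
    exact div_le_div_of_nonneg_right (abs_count_sub_le_of_count_block hL h N) hN'.le
  simpa using hdev.add_const ((c : ℝ) / L)

theorem sum_range_ite_natCast_eq (q : ℕ) [NeZero q] (y : ZMod q) :
    ∑ u ∈ range q, (if (u : ZMod q) = y then 1 else 0) = 1 := by
  have hcast : ∀ u ∈ range q, (u : ZMod q) = y ↔ u = y.val := fun u hu => by
    constructor
    · rintro rfl
      rw [ZMod.val_natCast, Nat.mod_eq_of_lt (mem_range.1 hu)]
    · rintro rfl
      exact ZMod.natCast_zmod_val y
  rw [sum_congr rfl fun u hu => if_congr (hcast u hu) rfl rfl, sum_ite_eq',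
    if_pos (mem_range.2 (ZMod.val_lt y))]

noncomputable def wqAddMul (q : ℕ) (θ : ℤ) (n : ℕ) : ZMod q := wq q n + θ * n

section Block

variable {q : ℕ}

theorem wqAddMul_two_digits (hq : 1 < q) (θ : ℤ) (a : ℕ) {u r : ℕ} (hu : u < q) (hr : r < q) :
    wqAddMul q θ ((a * q + u) * q + r) = u + θ * r + (a + wq q a) := by
  rw [wqAddMul, wq_two_digits hq a hu hr]
  push_cast
  rw [ZMod.natCast_self]
  ring

theorem count_wqAddMul_block (hq : 1 < q) (θ : ℤ) (z : ZMod q) (a : ℕ) :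
    count (fun k => wqAddMul q θ (a * (q * q) + k) = z) (q * q) = q := by
  have : NeZero q := ⟨by omega⟩
  set C : ZMod q := a + wq q a
  have hdigits : ∀ u ∈ range q, ∀ r ∈ range q,
      wqAddMul q θ (a * (q * q) + (u * q + r)) = z ↔ (u : ZMod q) = z - θ * r - C := by
    intro u hu r hr
    rw [show a * (q * q) + (u * q + r) = (a * q + u) * q + r by ring,
      wqAddMul_two_digits hq θ a (mem_range.1 hu) (mem_range.1 hr)]
    constructor <;> intro h <;> linear_combination h
  calc count (fun k => wqAddMul q θ (a * (q * q) + k) = z) (q * q)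
      = ∑ u ∈ range q, ∑ r ∈ range q,
          if wqAddMul q θ (a * (q * q) + (u * q + r)) = z then 1 else 0 := by
        rw [count_mul_eq_sum]
        simp only [count_eq_card_filter_range, card_filter]
    _ = ∑ r ∈ range q, ∑ u ∈ range q, if (u : ZMod q) = z - θ * r - C then 1 else 0 := by
        rw [sum_comm]
        exact sum_congr rfl fun r hr => sum_congr rfl fun u hu =>
          if_congr (hdigits u hu r hr) rfl rfl
    _ = q := by simp only [sum_range_ite_natCast_eq, sum_const, card_range, smul_eq_mul, mul_one]

end Block

theorem stmt_12_general (q : ℕ) (hq : 2 ≤ q) (θ : ℤ) (x : ℤ) :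
    Tendsto
      (fun N : ℕ =>
        (((Finset.range N).filter fun n =>
            ((wq q n : ℤ) + θ * n) % (q : ℤ) = x % (q : ℤ)).card : ℝ) / N)
      atTop (nhds (1 / q)) := by
  have hcount (N : ℕ) : #{n ∈ range N | ((wq q n : ℤ) + θ * n) % (q : ℤ) = x % (q : ℤ)}
      = count (fun n => wqAddMul q θ n = x) N := by
    rw [count_eq_card_filter_range]
    refine congrArg card (filter_congr fun n _ => ?_)
    rw [wqAddMul, ← ZMod.intCast_eq_intCast_iff']
    push_cast
    rfl
  have hdensity := tendsto_count_div_of_count_block (p := fun n => wqAddMul q θ n = x)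
    (by positivity : 0 < q * q)
    (count_wqAddMul_block hq θ (x : ZMod q))
  simp only [hcount]
  convert hdensity using 2
  push_cast
  field_simp

theorem stmt_12 (q : ℕ) (hq : 2 ≤ q) (θ : ℤ)
    (hθ : Int.gcd θ (q : ℤ) = 1 ∨ (q : ℤ) ∣ θ) (x : ℤ) :
    Tendsto
      (fun N : ℕ =>
        (((Finset.range N).filter fun n =>
            ((wq q n : ℤ) + θ * n) % (q : ℤ) = x % (q : ℤ)).card : ℝ) / N)
      atTop (nhds (1 / q)) :=
  stmt_12_general q hq θ x
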